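/- Suppose √d has continued fraction expansion [a₀; overline(a₁, …, a_{l−1}, a_l, a_{l−1}, …, a₁, 2a₀)] with even period length k = 2l. Then p_{k−1} = a₀·q_{k−1} + q_{k−2}. -/

import Mathlib

/-- Iteration of the Gauss-type map producing the complete quotients of the
continued fraction expansion of `α`. -/
noncomputable def cfIter (α : ℝ) : ℕ → ℝ
  | 0 => α
  | n + 1 => (Int.fract (cfIter α n))⁻¹

/-- The `n`-th partial quotient of the continued fraction of `α`. -/
noncomputable def cfTerm (α : ℝ) (n : ℕ) : ℤ := ⌊cfIter α n⌋

/-- `t` is an eventual period of the sequence `f`. -/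
def EvPeriod (t : ℕ) (f : ℕ → ℤ) : Prop := ∃ N, ∀ n, N ≤ n → f (n + t) = f n

/-- `periodLen α` is the length of the periodic part of the continued fraction
expansion of `α`: the least positive eventual period of its partial quotients. -/
noncomputable def periodLen (α : ℝ) : ℕ := sInf {t | 0 < t ∧ EvPeriod t (cfTerm α)}

/-- Numerators `p_k` of the convergents of the continued fraction `[a 0; a 1, a 2, …]`. -/
def convP (a : ℕ → ℤ) : ℕ → ℤ
  | 0 => a 0
  | 1 => a 0 * a 1 + 1
  | n + 2 => a (n + 2) * convP a (n + 1) + convP a n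

/-- Denominators `q_k` of the convergents of the continued fraction `[a 0; a 1, a 2, …]`. -/
def convQ (a : ℕ → ℤ) : ℕ → ℤ
  | 0 => 1
  | 1 => a 1
  | n + 2 => a (n + 2) * convQ a (n + 1) + convQ a n

/-! With `M(x) = !![x, 1; 1, 0]`, the product `M(a₀) ⋯ M(a_{k-1})` is
`!![p_{k-1}, p_{k-2}; q_{k-1}, q_{k-2}]`. It factors as `M(a₀) * S` where `S = M(a₁) ⋯ M(a_{k-1})`
is symmetric, being a palindromic product of symmetric matrices; reading off the entries of
`M(a₀) * S` and using `S₁₀ = S₀₁` gives `p_{k-1} = a₀ q_{k-1} + q_{k-2}`. -/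

open Matrix

def cfMatrix (x : ℤ) : Matrix (Fin 2) (Fin 2) ℤ := !![x, 1; 1, 0]

def cfMatrixProd (a : ℕ → ℤ) (n : ℕ) : Matrix (Fin 2) (Fin 2) ℤ :=
  ((List.range n).map (cfMatrix ∘ a)).prod

lemma cfMatrix_transpose (x : ℤ) : (cfMatrix x)ᵀ = cfMatrix x := by
  ext i j; fin_cases i <;> fin_cases j <;> rfl

lemma cfMatrixProd_succ (a : ℕ → ℤ) (n : ℕ) :
    cfMatrixProd a (n + 1) = cfMatrixProd a n * cfMatrix (a n) :=
  List.prod_range_succ _ n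

lemma cfMatrixProd_succ' (a : ℕ → ℤ) (n : ℕ) :
    cfMatrixProd a (n + 1) = cfMatrix (a 0) * cfMatrixProd (fun i => a (i + 1)) n :=
  List.prod_range_succ' _ n

lemma cfMatrixProd_eq_conv (a : ℕ → ℤ) (n : ℕ) :
    cfMatrixProd a (n + 2) = !![convP a (n + 1), convP a n; convQ a (n + 1), convQ a n] := by
  induction n with
  | zero =>
    rw [cfMatrixProd_succ, cfMatrixProd_succ, cfMatrixProd, List.range_zero, List.map_nil,
      List.prod_nil, one_mul]
    ext i j; fin_cases i <;> fin_cases j <;> simp [cfMatrix, convP, convQ]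
  | succ n ih =>
    rw [cfMatrixProd_succ, ih]
    ext i j; fin_cases i <;> fin_cases j <;> simp [cfMatrix, convP, convQ] <;> ring

lemma Matrix.transpose_list_prod_of_palindrome {m R : Type*} [CommSemiring R] [Fintype m]
    [DecidableEq m] (L : List (Matrix m m R)) (hsymm : ∀ M ∈ L, Mᵀ = M)
    (hpal : L.reverse = L) : L.prodᵀ = L.prod := by
  rw [transpose_list_prod, List.map_congr_left hsymm, List.map_id', hpal]

lemma cfMatrixProd_transpose_of_palindrome (a : ℕ → ℤ) (n : ℕ)
    (hpal : ∀ i < n, a i = a (n - 1 - i)) : (cfMatrixProd a n)ᵀ = cfMatrixProd a n := by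
  refine transpose_list_prod_of_palindrome _ (by simp [cfMatrix_transpose]) ?_
  rw [← List.map_reverse, List.range_eq_range', List.reverse_range', ← List.range_eq_range',
    List.map_map]
  refine List.map_congr_left fun i hi => ?_
  simp [hpal i (List.mem_range.mp hi)]

lemma cfMatrix_mul_apply_zero_zero (x : ℤ) {S : Matrix (Fin 2) (Fin 2) ℤ} (hS : Sᵀ = S) :
    (cfMatrix x * S) 0 0 = x * (cfMatrix x * S) 1 0 + (cfMatrix x * S) 1 1 := by
  have h : S 1 0 = S 0 1 := congrFun (congrFun hS 0) 1
  simp [cfMatrix, mul_apply, Fin.sum_univ_two, h]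

theorem stmt10 (l : ℕ) (hl : 1 ≤ l) (a : ℕ → ℤ)
    (hpal : ∀ i, 1 ≤ i → i ≤ 2 * l - 1 → a i = a (2 * l - i)) :
    convP a (2 * l - 1) = a 0 * convQ a (2 * l - 1) + convQ a (2 * l - 2) := by
  obtain ⟨n, rfl⟩ : ∃ n, l = n + 1 := ⟨l - 1, by omega⟩
  have hsymm : (cfMatrixProd (fun i => a (i + 1)) (2 * n + 1))ᵀ =
      cfMatrixProd (fun i => a (i + 1)) (2 * n + 1) :=
    cfMatrixProd_transpose_of_palindrome _ _ fun i hi => by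
      rw [hpal (i + 1) (by omega) (by omega)]; congr 1; omega
  have hfactor := (cfMatrixProd_succ' a (2 * n + 1)).symm.trans (cfMatrixProd_eq_conv a (2 * n))
  have h := cfMatrix_mul_apply_zero_zero (a 0) hsymm
  rw [hfactor] at h
  simpa [show 2 * (n + 1) - 1 = 2 * n + 1 by omega, show 2 * (n + 1) - 2 = 2 * n by omega] using h
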